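/- arXiv:2504.14937 — 4 statements merged into one kernel-verified Lean document; each statement's English description precedes it below -/
import Mathlib

section
/- Let G be a DAG and let V, U be two distinct vertices of G. Let H_{VU} denote the graph that results from G by contracting V and U into a single vertex. Then H_{VU} contains a directed cycle if and only if G contains a directed path P from V to U (or from U to V) of length at least 2. -/
/-!
STATEMENT 0: Let `G` be a DAG and `V, U` two distinct vertices.  Let `H_{VU}` be the
graph obtained from `G` by contracting `V` and `U` into a single vertex.  Then `H_{VU}`
contains a directed cycle iff `G` contains a directed path from `V` to `U` (or from `U`
to `V`) of length at least `2`.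

We model a directed graph on a finite vertex type `α` by its edge relation
`E : α → α → Prop` (edges join distinct vertices, which follows from acyclicity).
The contraction of `v` and `u` is modelled on the same type, with `v` serving as the
new merged vertex and `u` deleted (no edges of the contracted graph touch `u`).
A directed cycle is a nonempty closed directed walk, i.e. `Relation.TransGen E w w`
for some vertex `w`; a directed path from `a` to `b` of length `≥ 2` is witnessed by
`∃ w, E a w ∧ Relation.TransGen E w b`.
-/

namespace CausalDAGSummary

variable {α : Type*}

/-- The edge relation of the graph obtained by contracting the two distinct vertices
`v` and `u` into a single vertex: the merged vertex is represented by `v`, the vertex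
`u` is removed, the merged vertex inherits all edges of `v` and of `u` to/from the
remaining vertices, any edge between `v` and `u` is removed, and edges among the other
vertices are kept. -/
def contractE (E : α → α → Prop) (v u : α) : α → α → Prop := fun a b =>
  a ≠ u ∧ b ≠ u ∧ a ≠ b ∧
    ((a = v ∧ (E v b ∨ E u b)) ∨ (b = v ∧ (E a v ∨ E a u)) ∨
      (a ≠ v ∧ b ≠ v ∧ E a b))

/-- A directed graph (edge relation) is a DAG when it has no directed cycle. -/
def IsDAG (E : α → α → Prop) : Prop := ∀ a, ¬ Relation.TransGen E a a

/-!
Away from the merged vertex the contraction is a subgraph of `G`, so every cycle of the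
contraction passes through the merged vertex; and a walk of the contraction from `x` into the
merged vertex is the same as a walk of `G` from `x` into `v` or into `u`. A cycle is therefore an
edge `v → x` or `u → x` of `G` followed by a walk of `G` from `x` back to `v` or to `u`; acyclicity
of `G` rules out returning to the starting vertex, which leaves the two paths of the theorem.
-/

open Relation

theorem transGen_avoiding_or_through {r : α → α → Prop} {v a b : α} (h : TransGen r a b)
    (ha : a ≠ v) (hb : b ≠ v) :
    TransGen (fun x y => r x y ∧ x ≠ v ∧ y ≠ v) a b ∨ (TransGen r a v ∧ TransGen r v b) := by
  induction h with
  | single hab => exact Or.inl (.single ⟨hab, ha, hb⟩)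
  | @tail c b hac hcb ih =>
    by_cases hc : c = v
    · subst hc
      exact Or.inr ⟨hac, .single hcb⟩
    · rcases ih hc with hac | ⟨hav, hvc⟩
      · exact Or.inl (hac.tail ⟨hcb, hc, hb⟩)
      · exact Or.inr ⟨hav, hvc.tail hcb⟩

section Contraction

variable {E : α → α → Prop} {v u : α}

theorem contractE_of_ne {a b : α} (h : contractE E v u a b) (ha : a ≠ v) (hb : b ≠ v) :
    E a b := by
  obtain ⟨-, -, -, ⟨rfl, -⟩ | ⟨rfl, -⟩ | ⟨-, -, hab⟩⟩ := h
  exacts [(ha rfl).elim, (hb rfl).elim, hab]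

theorem contractE_of_ne_of_ne {a b : α} (hau : a ≠ u) (hbu : b ≠ u) (hab : a ≠ b)
    (hav : a ≠ v) (hbv : b ≠ v) (h : E a b) : contractE E v u a b :=
  ⟨hau, hbu, hab, Or.inr (Or.inr ⟨hav, hbv, h⟩)⟩

theorem contractE_merged_left_iff (hvu : v ≠ u) {x : α} :
    contractE E v u v x ↔ x ≠ u ∧ x ≠ v ∧ (E v x ∨ E u x) := by
  constructor
  · rintro ⟨-, hxu, hvx, ⟨-, hE⟩ | ⟨rfl, -⟩ | ⟨hvv, -⟩⟩
    exacts [⟨hxu, Ne.symm hvx, hE⟩, (hvx rfl).elim, (hvv rfl).elim]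
  · rintro ⟨hxu, hxv, hE⟩
    exact ⟨hvu, hxu, Ne.symm hxv, Or.inl ⟨rfl, hE⟩⟩

theorem contractE_merged_right_iff (hvu : v ≠ u) {x : α} :
    contractE E v u x v ↔ x ≠ u ∧ x ≠ v ∧ (E x v ∨ E x u) := by
  constructor
  · rintro ⟨hxu, -, hxv, ⟨rfl, -⟩ | ⟨-, hE⟩ | ⟨-, hvv, -⟩⟩
    exacts [(hxv rfl).elim, ⟨hxu, hxv, hE⟩, (hvv rfl).elim]
  · rintro ⟨hxu, hxv, hE⟩
    exact ⟨hxu, hvu, hxv, Or.inr (Or.inl ⟨rfl, hE⟩)⟩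

theorem contractE_merged_of_mem (hvu : v ≠ u) {x t : α} (ht : t = v ∨ t = u) (hxv : x ≠ v)
    (hxu : x ≠ u) (h : E x t) : contractE E v u x v := by
  refine (contractE_merged_right_iff hvu).mpr ⟨hxu, hxv, ?_⟩
  rcases ht with rfl | rfl
  exacts [Or.inl h, Or.inr h]

theorem transGen_contractE_merged_of_transGen (hvu : v ≠ u) {x t : α} (ht : t = v ∨ t = u)
    (h : TransGen E x t) (hxv : x ≠ v) (hxu : x ≠ u) : TransGen (contractE E v u) x v := by
  induction h using TransGen.head_induction_on with
  | single hxt => exact .single (contractE_merged_of_mem hvu ht hxv hxu hxt)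
  | @head x z hxz _ ih =>
    by_cases hz : z = v ∨ z = u
    · exact .single (contractE_merged_of_mem hvu hz hxv hxu hxz)
    · obtain ⟨hzv, hzu⟩ := not_or.mp hz
      obtain rfl | hxz' := eq_or_ne x z
      · exact ih hzv hzu
      · exact (ih hzv hzu).head (contractE_of_ne_of_ne hxu hzu hxz' hxv hzv hxz)

theorem transGen_contractE_merged_iff (hvu : v ≠ u) {x : α} (hxv : x ≠ v) (hxu : x ≠ u) :
    TransGen (contractE E v u) x v ↔ TransGen E x v ∨ TransGen E x u := by
  refine ⟨fun h => ?_, fun h => ?_⟩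
  · induction h using TransGen.head_induction_on with
    | single hxv' => exact ((contractE_merged_right_iff hvu).mp hxv').2.2.imp .single .single
    | @head x z hxz _ ih =>
      by_cases hz : z = v
      · subst hz
        exact ((contractE_merged_right_iff hvu).mp hxz).2.2.imp .single .single
      · have hE := contractE_of_ne hxz hxv hz
        exact (ih hz hxz.2.1).imp (.head hE) (.head hE)
  · rcases h with h | h
    exacts [transGen_contractE_merged_of_transGen hvu (Or.inl rfl) h hxv hxu,
      transGen_contractE_merged_of_transGen hvu (Or.inr rfl) h hxv hxu]

theorem transGen_contractE_merged_self_iff (hvu : v ≠ u) :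
    TransGen (contractE E v u) v v ↔
      ∃ x, x ≠ u ∧ x ≠ v ∧ (E v x ∨ E u x) ∧ (TransGen E x v ∨ TransGen E x u) := by
  rw [TransGen.head'_iff]
  refine exists_congr fun x => ?_
  rw [contractE_merged_left_iff hvu]
  constructor
  · rintro ⟨⟨hxu, hxv, hE⟩, hxv'⟩
    have hxv' := (reflTransGen_iff_eq_or_transGen.mp hxv').resolve_left (Ne.symm hxv)
    exact ⟨hxu, hxv, hE, (transGen_contractE_merged_iff hvu hxv hxu).mp hxv'⟩
  · rintro ⟨hxu, hxv, hE, hx⟩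
    exact ⟨⟨hxu, hxv, hE⟩, ((transGen_contractE_merged_iff hvu hxv hxu).mpr hx).to_reflTransGen⟩

theorem IsDAG.exists_transGen_contractE_self_iff (hG : IsDAG E) :
    (∃ w, TransGen (contractE E v u) w w) ↔ TransGen (contractE E v u) v v := by
  refine ⟨fun ⟨w, hw⟩ => ?_, fun h => ⟨v, h⟩⟩
  obtain rfl | hwv := eq_or_ne w v
  · exact hw
  rcases transGen_avoiding_or_through hw hwv hwv with hw' | ⟨hwv', hvw⟩
  · exact (hG w (TransGen.mono (fun a b ⟨hab, ha, hb⟩ => contractE_of_ne hab ha hb) _ _ hw')).elim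
  · exact hvw.trans hwv'

end Contraction

theorem contraction_acyclic_iff_general {α : Type*}
    (E : α → α → Prop) (hG : IsDAG E) (V U : α) (hVU : V ≠ U) :
    (∃ w, Relation.TransGen (contractE E V U) w w) ↔
      ((∃ w, E V w ∧ Relation.TransGen E w U) ∨
        (∃ w, E U w ∧ Relation.TransGen E w V)) := by
  rw [hG.exists_transGen_contractE_self_iff, transGen_contractE_merged_self_iff hVU]
  constructor
  · rintro ⟨x, -, -, hVx | hUx, hxV | hxU⟩
    · exact (hG V (hxV.head hVx)).elim
    · exact Or.inl ⟨x, hVx, hxU⟩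
    · exact Or.inr ⟨x, hUx, hxV⟩
    · exact (hG U (hxU.head hUx)).elim
  · rintro (⟨w, hVw, hwU⟩ | ⟨w, hUw, hwV⟩)
    · refine ⟨w, ?_, ?_, Or.inl hVw, Or.inr hwU⟩
      · rintro rfl
        exact hG w hwU
      · rintro rfl
        exact hG w (.single hVw)
    · refine ⟨w, ?_, ?_, Or.inr hUw, Or.inl hwV⟩
      · rintro rfl
        exact hG w (.single hUw)
      · rintro rfl
        exact hG w hwV

theorem contraction_acyclic_iff {α : Type*} [Fintype α]
    (E : α → α → Prop) (hG : IsDAG E) (V U : α) (hVU : V ≠ U) :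
    (∃ w, Relation.TransGen (contractE E V U) w w) ↔
      ((∃ w, E V w ∧ Relation.TransGen E w U) ∨
        (∃ w, E U w ∧ Relation.TransGen E w V)) :=
  contraction_acyclic_iff_general E hG V U hVU

end CausalDAGSummary
end

section
/- Let (H,f) be a summary DAG of a DAG G with a fixed complete topological order of V(G), and let G_H be the associated canonical causal DAG. Then the recursive basis of H and the recursive basis of G_H are equivalent: every conditional-independence statement in Sigma_RB(G_H) is implied by Sigma_RB(H) and vice versa. In particular, for every joint probability distribution P over random variables indexed by V(G), P satisfies all conditional-independence statements of Sigma_RB(H) (with each cluster node of H interpreted as the joint random vector of its constituent variables) if and only if P satisfies all conditional-independence statements of Sigma_RB(G_H). -/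
/-!
STATEMENT 7: Let `(H, f)` be a summary DAG of a DAG `G` with a fixed complete
topological order of `V(G)`, and let `G_H` be the associated canonical causal DAG.
Then the recursive basis of `H` and the recursive basis of `G_H` are equivalent:
every conditional-independence statement in `Σ_RB(G_H)` is implied (derivable via the
semi-graphoid axioms) from `Σ_RB(H)` and vice versa.  In particular, for every joint
probability distribution `P` over random variables indexed by `V(G)`, `P` satisfies
all conditional-independence statements of `Σ_RB(H)` (each cluster node of `H`
interpreted as the joint random vector of its constituent variables) iff `P`
satisfies all conditional-independence statements of `Σ_RB(G_H)`.

We model `V(G)` as `Fin n` with the natural order as the fixed complete topological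
order, and `V(H)` as `Fin m` with the natural order as a complete topological order
of `H`; the surjection `f : Fin n → Fin m` is monotone, so that the natural order of
`Fin n` is simultaneously a complete topological order for the canonical causal DAG
`G_H` (clusters listed consecutively, in the order of `H`).
-/

namespace CausalDAGSummary

open MeasureTheory ProbabilityTheory

/-- A conditional-independence statement `(A ⊥ B | C)` over variables of type `V`. -/
structure CI (V : Type*) where
  A : Set V
  B : Set V
  C : Set V

/-- Derivability of a conditional-independence statement from a set of such
statements via the semi-graphoid axioms (triviality, symmetry, decomposition,
weak union, contraction). -/
inductive SGDerives {V : Type*} (S : Set (CI V)) : CI V → Prop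
  | mem (ci : CI V) : ci ∈ S → SGDerives S ci
  | triviality (A C : Set V) : SGDerives S ⟨A, ∅, C⟩
  | symmetry (A B C : Set V) : SGDerives S ⟨A, B, C⟩ → SGDerives S ⟨B, A, C⟩
  | decomposition (A B D C : Set V) :
      SGDerives S ⟨A, B ∪ D, C⟩ → SGDerives S ⟨A, B, C⟩
  | weakUnion (A B D C : Set V) :
      SGDerives S ⟨A, B ∪ D, C⟩ → SGDerives S ⟨A, B, C ∪ D⟩
  | contraction (A B D C : Set V) :
      SGDerives S ⟨A, B, C⟩ → SGDerives S ⟨A, D, B ∪ C⟩ →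
      SGDerives S ⟨A, B ∪ D, C⟩

/-- The edge relation of the canonical causal DAG `G_H` associated with the summary
DAG `(H, f)` of `G` and the complete topological order on `Fin n`. -/
def canonicalE {n m : ℕ} (E : Fin n → Fin n → Prop)
    (EH : Fin m → Fin m → Prop) (f : Fin n → Fin m) : Fin n → Fin n → Prop :=
  fun i j => E i j ∨ EH (f i) (f j) ∨ (f i = f j ∧ i < j)

/-- `Σ_RB(G_H)`: the recursive basis of the canonical causal DAG, a set of
conditional-independence statements over the original variables. -/
def RBCanonical {n m : ℕ} (E : Fin n → Fin n → Prop)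
    (EH : Fin m → Fin m → Prop) (f : Fin n → Fin m) : Set (CI (Fin n)) :=
  {ci | ∃ i : Fin n,
    ci = ⟨{i}, {j | j < i ∧ ¬ canonicalE E EH f j i}, {j | canonicalE E EH f j i}⟩}

/-- `Σ_RB(H)`: the recursive basis of the summary DAG `H`, with each cluster node of
`H` interpreted as the set of original variables it represents. -/
def RBSummary {n m : ℕ} (EH : Fin m → Fin m → Prop) (f : Fin n → Fin m) :
    Set (CI (Fin n)) :=
  {ci | ∃ h : Fin m,
    ci = ⟨f ⁻¹' {h}, {x | f x < h ∧ ¬ EH (f x) h}, {x | EH (f x) h}⟩}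

/-- The σ-algebra generated by the random vector `(X i)_{i ∈ S}`. -/
def sigmaOn {n : ℕ} {Ω : Type*} (X : Fin n → Ω → ℝ) (S : Set (Fin n)) :
    MeasurableSpace Ω :=
  ⨆ i ∈ S, MeasurableSpace.comap (X i) inferInstance

/-- The joint distribution `μ` of the random variables `X` satisfies the
conditional-independence statement `ci`: the random vectors indexed by `ci.A` and
`ci.B` are conditionally independent given the one indexed by `ci.C`. -/
def SatCI {n : ℕ} {Ω : Type*} [MeasurableSpace Ω] [StandardBorelSpace Ω]
    (μ : Measure Ω) [IsFiniteMeasure μ]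
    (X : Fin n → Ω → ℝ) (hX : ∀ i, Measurable (X i)) (ci : CI (Fin n)) : Prop :=
  CondIndep (sigmaOn X ci.C) (sigmaOn X ci.A) (sigmaOn X ci.B)
    (iSup_le fun i => iSup_le fun _ => (hX i).comap_le) μ

end CausalDAGSummary

/-!
Let the cluster of a variable `i` be `f⁻¹' {f i}`. Because `f` is monotone, the parents of `i`
in `G_H` are the variables of the parent clusters of `f i` together with the earlier variables of
its own cluster, and its non-parent predecessors are exactly the variables of the earlier
non-parent clusters. Hence each statement of `Σ_RB(G_H)` follows from the statement of
`Σ_RB(H)` for its cluster by decomposition and weak union, and conversely the statement of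
`Σ_RB(H)` for a cluster is assembled from those of its variables, one at a time in the
topological order, by contraction. The probabilistic part is soundness of the semi-graphoid
axioms, where weak union and contraction come from the characterisation of `A ⊥ B | C` by
`P(a | σ(B ∪ C)) = P(a | σ(C))` for every event `a ∈ σ(A)`.
-/

open MeasureTheory ProbabilityTheory Set

theorem IsPiSystem.image2_inter {Ω : Type*} {C D : Set (Set Ω)} (hC : IsPiSystem C)
    (hD : IsPiSystem D) : IsPiSystem (image2 (· ∩ ·) C D) := by
  rintro _ ⟨s₁, hs₁, t₁, ht₁, rfl⟩ _ ⟨s₂, hs₂, t₂, ht₂, rfl⟩ hne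
  rw [inter_inter_inter_comm] at hne ⊢
  exact mem_image2_of_mem (hC _ hs₁ _ hs₂ (hne.mono inter_subset_left))
    (hD _ ht₁ _ ht₂ (hne.mono inter_subset_right))

theorem MeasurableSpace.sup_eq_generateFrom_image2_inter {Ω : Type*}
    (m₁ m₂ : MeasurableSpace Ω) :
    m₁ ⊔ m₂ = generateFrom
      (image2 (· ∩ ·) {s | MeasurableSet[m₁] s} {s | MeasurableSet[m₂] s}) := by
  refine le_antisymm (sup_le ?_ ?_) (generateFrom_le ?_)
  · exact fun s hs ↦ measurableSet_generateFrom ⟨s, hs, univ, .univ, inter_univ s⟩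
  · exact fun s hs ↦ measurableSet_generateFrom ⟨univ, .univ, s, hs, univ_inter s⟩
  · rintro _ ⟨s, hs, t, ht, rfl⟩
    exact (le_sup_left (b := m₂) s hs).inter (le_sup_right (a := m₁) t ht)

namespace MeasureTheory

theorem setIntegral_eq_of_isPiSystem {Ω E : Type*} [NormedAddCommGroup E] [NormedSpace ℝ E]
    {m mΩ : MeasurableSpace Ω} {μ : Measure Ω} {f g : Ω → E} {p : Set (Set Ω)}
    (hm : m ≤ mΩ) (hgen : m = MeasurableSpace.generateFrom p) (hp : IsPiSystem p)
    (hf : Integrable f μ) (hg : Integrable g μ) (huniv : ∫ x, f x ∂μ = ∫ x, g x ∂μ)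
    (heq : ∀ s ∈ p, ∫ x in s, f x ∂μ = ∫ x in s, g x ∂μ) {s : Set Ω}
    (hs : MeasurableSet[m] s) :
    ∫ x in s, f x ∂μ = ∫ x in s, g x ∂μ := by
  induction s, hs using MeasurableSpace.induction_on_inter hgen hp with
  | empty => simp
  | basic s hs => exact heq s hs
  | compl t htm ih =>
    rw [← sub_eq_of_eq_add' (integral_add_compl (hm t htm) hf).symm,
      ← sub_eq_of_eq_add' (integral_add_compl (hm t htm) hg).symm, ih, huniv]
  | iUnion s hdisj hsm ih =>
    have hsm' := fun i ↦ hm _ (hsm i)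
    rw [integral_iUnion hsm' hdisj hf.integrableOn, integral_iUnion hsm' hdisj hg.integrableOn]
    exact tsum_congr ih

variable {Ω : Type*} {m mΩ : MeasurableSpace Ω} {μ : Measure Ω} [IsFiniteMeasure μ]

theorem condExp_indicator_ae_eq_mul {g : Ω → ℝ} {t : Set Ω} (hg : StronglyMeasurable[m] g)
    (hgi : Integrable g μ) (ht : MeasurableSet t) :
    μ[t.indicator g | m] =ᵐ[μ] g * μ⟦t | m⟧ := by
  have hind : t.indicator g = g * t.indicator 1 := by
    ext x; by_cases hx : x ∈ t <;> simp [hx]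
  rw [hind]
  exact condExp_mul_of_stronglyMeasurable_left hg (hind ▸ hgi.indicator ht)
    ((integrable_const 1).indicator ht)

end MeasureTheory

namespace ProbabilityTheory

variable {Ω : Type*} {m' m₁ m₂ m₃ mΩ : MeasurableSpace Ω} [StandardBorelSpace Ω]
  {μ : Measure Ω} [IsFiniteMeasure μ]

theorem CondIndep.condExp_sup_ae_eq {hm' : m' ≤ mΩ} (hm₁ : m₁ ≤ mΩ) (hm₂ : m₂ ≤ mΩ)
    (h : CondIndep m' m₁ m₂ hm' μ) {A : Set Ω} (hA : MeasurableSet[m₁] A) :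
    μ⟦A | m' ⊔ m₂⟧ =ᵐ[μ] μ⟦A | m'⟧ := by
  have hAΩ := hm₁ A hA
  have h1A : Integrable (A.indicator fun _ ↦ (1 : ℝ)) μ := (integrable_const 1).indicator hAΩ
  have hsm : StronglyMeasurable[m' ⊔ m₂] (μ⟦A | m'⟧) :=
    stronglyMeasurable_condExp.mono le_sup_left
  refine (ae_eq_condExp_of_forall_setIntegral_eq (sup_le hm' hm₂) h1A
    (fun _ _ _ ↦ integrable_condExp.integrableOn) (fun s hs _ ↦ ?_)
    hsm.aestronglyMeasurable).symm
  refine setIntegral_eq_of_isPiSystem (sup_le hm' hm₂)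
    (MeasurableSpace.sup_eq_generateFrom_image2_inter m' m₂)
    ((@MeasurableSpace.isPiSystem_measurableSet _ m').image2_inter
      (@MeasurableSpace.isPiSystem_measurableSet _ m₂))
    integrable_condExp h1A (integral_condExp hm') ?_ hs
  rintro _ ⟨C, hC, B, hB, rfl⟩
  have hBΩ := hm₂ B hB
  have hprod := (condIndep_iff m' m₁ m₂ hm' hm₁ hm₂ μ).1 h A B hA hB
  calc ∫ x in C ∩ B, (μ⟦A | m'⟧) x ∂μ
      = ∫ x in C, B.indicator (μ⟦A | m'⟧) x ∂μ := (setIntegral_indicator hBΩ).symm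
    _ = ∫ x in C, (μ[B.indicator (μ⟦A | m'⟧) | m']) x ∂μ :=
        (setIntegral_condExp hm' (integrable_condExp.indicator hBΩ) hC).symm
    _ = ∫ x in C, (μ⟦A ∩ B | m'⟧) x ∂μ := setIntegral_congr_ae (hm' C hC)
        (((condExp_indicator_ae_eq_mul stronglyMeasurable_condExp integrable_condExp hBΩ).trans
          hprod.symm).mono fun x hx _ ↦ hx)
    _ = ∫ x in C, B.indicator (A.indicator fun _ ↦ (1 : ℝ)) x ∂μ := by
        rw [setIntegral_condExp hm' ((integrable_const 1).indicator (hAΩ.inter hBΩ)) hC,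
          Set.indicator_indicator, inter_comm]
    _ = ∫ x in C ∩ B, A.indicator (fun _ ↦ (1 : ℝ)) x ∂μ := setIntegral_indicator hBΩ

theorem condIndep_of_condExp_sup_ae_eq (hm' : m' ≤ mΩ) (hm₁ : m₁ ≤ mΩ)
    (hm₂ : m₂ ≤ mΩ)
    (h : ∀ A, MeasurableSet[m₁] A → μ⟦A | m' ⊔ m₂⟧ =ᵐ[μ] μ⟦A | m'⟧) :
    CondIndep m' m₁ m₂ hm' μ := by
  refine (condIndep_iff m' m₁ m₂ hm' hm₁ hm₂ μ).2 fun A B hA hB ↦ ?_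
  have hAΩ := hm₁ A hA
  have h1A : Integrable (A.indicator fun _ ↦ (1 : ℝ)) μ := (integrable_const 1).indicator hAΩ
  calc μ⟦A ∩ B | m'⟧
      = μ[B.indicator (A.indicator fun _ ↦ (1 : ℝ)) | m'] := by
        rw [Set.indicator_indicator, inter_comm]
    _ =ᵐ[μ] μ[μ[B.indicator (A.indicator fun _ ↦ (1 : ℝ)) | m' ⊔ m₂] | m'] :=
        (condExp_condExp_of_le le_sup_left (sup_le hm' hm₂)).symm
    _ =ᵐ[μ] μ[B.indicator (μ⟦A | m'⟧) | m'] := condExp_congr_ae <|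
        (condExp_indicator h1A (le_sup_right (a := m') B hB)).trans
          (h A hA).indicator
    _ =ᵐ[μ] μ⟦A | m'⟧ * μ⟦B | m'⟧ :=
        condExp_indicator_ae_eq_mul stronglyMeasurable_condExp integrable_condExp (hm₂ B hB)

theorem CondIndep.of_cond_eq {m'' : MeasurableSpace Ω} {hm' : m' ≤ mΩ}
    (h : CondIndep m' m₁ m₂ hm' μ) (he : m' = m'') (hm'' : m'' ≤ mΩ) :
    CondIndep m'' m₁ m₂ hm'' μ := by
  subst he
  exact h

theorem CondIndep.weakUnion {hm' : m' ≤ mΩ} (hm₁ : m₁ ≤ mΩ) (hm₂ : m₂ ≤ mΩ)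
    (hm₃ : m₃ ≤ mΩ) (h : CondIndep m' m₁ (m₂ ⊔ m₃) hm' μ) :
    CondIndep (m' ⊔ m₃) m₁ m₂ (sup_le hm' hm₃) μ := by
  refine condIndep_of_condExp_sup_ae_eq _ hm₁ hm₂ fun A hA ↦ ?_
  have h₃ := condIndep_of_condIndep_of_le_right h le_sup_right
  rw [sup_assoc, sup_comm m₃]
  exact (h.condExp_sup_ae_eq hm₁ (sup_le hm₂ hm₃) hA).trans
    (h₃.condExp_sup_ae_eq hm₁ hm₃ hA).symm

theorem CondIndep.contraction {hm' : m' ≤ mΩ} (hm₁ : m₁ ≤ mΩ) (hm₂ : m₂ ≤ mΩ)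
    (hm₃ : m₃ ≤ mΩ) (h₂ : CondIndep m' m₁ m₂ hm' μ)
    (h₃ : CondIndep (m' ⊔ m₂) m₁ m₃ (sup_le hm' hm₂) μ) :
    CondIndep m' m₁ (m₂ ⊔ m₃) hm' μ := by
  refine condIndep_of_condExp_sup_ae_eq _ hm₁ (sup_le hm₂ hm₃) fun A hA ↦ ?_
  rw [← sup_assoc]
  exact (h₃.condExp_sup_ae_eq hm₁ hm₃ hA).trans (h₂.condExp_sup_ae_eq hm₁ hm₂ hA)

end ProbabilityTheory

namespace CausalDAGSummary

namespace SGDerives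

variable {V : Type*} {S : Set (CI V)} {A A' B C D : Set V}

theorem mono_left (h : SGDerives S ⟨A, B, C⟩) (hA : A' ⊆ A) : SGDerives S ⟨A', B, C⟩ := by
  rw [← union_eq_self_of_subset_left hA] at h
  exact symmetry _ _ _ (decomposition _ _ _ _ (symmetry _ _ _ h))

theorem weakUnion_left (h : SGDerives S ⟨A ∪ D, B, C⟩) : SGDerives S ⟨A, B, C ∪ D⟩ :=
  symmetry _ _ _ (weakUnion _ _ _ _ (symmetry _ _ _ h))

theorem contraction_left (h₁ : SGDerives S ⟨A, B, C⟩)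
    (h₂ : SGDerives S ⟨D, B, A ∪ C⟩) : SGDerives S ⟨A ∪ D, B, C⟩ :=
  symmetry _ _ _ (contraction _ _ _ _ (symmetry _ _ _ h₁) (symmetry _ _ _ h₂))

end SGDerives

section Soundness

variable {n : ℕ} {Ω : Type*} (X : Fin n → Ω → ℝ)

theorem sigmaOn_union (S T : Set (Fin n)) : sigmaOn X (S ∪ T) = sigmaOn X S ⊔ sigmaOn X T :=
  iSup_union

theorem sigmaOn_empty : sigmaOn X ∅ = ⊥ :=
  iSup_emptyset

variable [mΩ : MeasurableSpace Ω]

theorem sigmaOn_le (hX : ∀ i, Measurable (X i)) (S : Set (Fin n)) : sigmaOn X S ≤ mΩ :=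
  iSup₂_le fun i _ ↦ (hX i).comap_le

variable [StandardBorelSpace Ω] {μ : Measure Ω} [IsFiniteMeasure μ] {X}

theorem SGDerives.satCI (hX : ∀ i, Measurable (X i)) {S : Set (CI (Fin n))} {ci : CI (Fin n)}
    (hd : SGDerives S ci) (hS : ∀ c ∈ S, SatCI μ X hX c) : SatCI μ X hX ci := by
  have hle := sigmaOn_le X hX
  induction hd with
  | mem c hc => exact hS c hc
  | triviality A C =>
    change CondIndep _ _ (sigmaOn X ∅) _ μ
    rw [sigmaOn_empty]
    exact condIndep_bot_right _
  | symmetry A B C _ ih => exact ih.symm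
  | decomposition A B D C _ ih =>
    exact condIndep_of_condIndep_of_le_right ih (sigmaOn_union X B D ▸ le_sup_left)
  | weakUnion A B D C _ ih =>
    change CondIndep _ _ (sigmaOn X (B ∪ D)) _ μ at ih
    rw [sigmaOn_union] at ih
    exact (ih.weakUnion (hle A) (hle B) (hle D)).of_cond_eq (sigmaOn_union X C D).symm _
  | contraction A B D C _ _ ih₁ ih₂ =>
    change CondIndep (sigmaOn X (B ∪ C)) _ _ _ μ at ih₂
    change CondIndep _ _ (sigmaOn X (B ∪ D)) _ μ
    rw [sigmaOn_union]
    refine CondIndep.contraction (hle A) (hle B) (hle D) ih₁ ?_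
    exact ih₂.of_cond_eq (by rw [sigmaOn_union, sup_comm]) _

theorem satCI_iff_of_sgDerives (hX : ∀ i, Measurable (X i)) {S T : Set (CI (Fin n))}
    (hST : ∀ c ∈ T, SGDerives S c) (hTS : ∀ c ∈ S, SGDerives T c) :
    (∀ c ∈ S, SatCI μ X hX c) ↔ ∀ c ∈ T, SatCI μ X hX c :=
  ⟨fun h c hc ↦ (hST c hc).satCI hX h, fun h c hc ↦ (hTS c hc).satCI hX h⟩

end Soundness

section RecursiveBasis

variable {n m : ℕ} {E : Fin n → Fin n → Prop} {EH : Fin m → Fin m → Prop}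
  {f : Fin n → Fin m}

theorem canonicalE_parents_eq (htopoG : ∀ i j, E i j → i < j)
    (hsummary : ∀ i j, E i j → f i = f j ∨ EH (f i) (f j)) (i : Fin n) :
    {j | canonicalE E EH f j i} = {x | EH (f x) (f i)} ∪ {x | f x = f i ∧ x < i} := by
  ext j
  simp only [canonicalE, mem_ofPred_eq, mem_union]
  constructor
  · rintro (hE | hEH | hsib)
    · exact (hsummary j i hE).symm.imp id fun he ↦ ⟨he, htopoG j i hE⟩
    · exact .inl hEH
    · exact .inr hsib
  · rintro (hEH | hsib)
    · exact .inr (.inl hEH)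
    · exact .inr (.inr hsib)

theorem canonicalE_nonParents_eq (hmono : Monotone f)
    (hsummary : ∀ i j, E i j → f i = f j ∨ EH (f i) (f j)) (i : Fin n) :
    {j | j < i ∧ ¬ canonicalE E EH f j i} = {x | f x < f i ∧ ¬ EH (f x) (f i)} := by
  ext j
  simp only [canonicalE, mem_ofPred_eq, not_or, not_and, not_lt]
  constructor
  · rintro ⟨hji, -, hEH, hsib⟩
    exact ⟨(hmono hji.le).lt_of_ne fun he ↦ (hsib he).not_gt hji, hEH⟩
  · rintro ⟨hlt, hEH⟩
    refine ⟨hmono.reflect_lt hlt, fun hE ↦ ?_, hEH, fun he ↦ absurd he hlt.ne⟩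
    exact (hsummary j i hE).elim hlt.ne hEH

theorem RBCanonical_eq (htopoG : ∀ i j, E i j → i < j) (hmono : Monotone f)
    (hsummary : ∀ i j, E i j → f i = f j ∨ EH (f i) (f j)) :
    RBCanonical E EH f = {ci | ∃ i : Fin n, ci = ⟨{i}, {x | f x < f i ∧ ¬ EH (f x) (f i)},
      {x | EH (f x) (f i)} ∪ {x | f x = f i ∧ x < i}⟩} := by
  simp only [RBCanonical, canonicalE_parents_eq htopoG hsummary,
    canonicalE_nonParents_eq hmono hsummary]

theorem sgDerives_RBSummary_of_mem_RBCanonical (htopoG : ∀ i j, E i j → i < j)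
    (hmono : Monotone f) (hsummary : ∀ i j, E i j → f i = f j ∨ EH (f i) (f j)) :
    ∀ ci ∈ RBCanonical E EH f, SGDerives (RBSummary EH f) ci := by
  rw [RBCanonical_eq htopoG hmono hsummary]
  rintro _ ⟨i, rfl⟩
  have hcluster : SGDerives (RBSummary EH f)
      ⟨f ⁻¹' {f i}, {x | f x < f i ∧ ¬ EH (f x) (f i)}, {x | EH (f x) (f i)}⟩ :=
    .mem _ ⟨f i, rfl⟩
  refine (hcluster.mono_left ?_).weakUnion_left
  rintro x (rfl | ⟨hx, -⟩)
  exacts [rfl, hx]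

theorem sgDerives_cluster_prefix (htopoG : ∀ i j, E i j → i < j) (hmono : Monotone f)
    (hsummary : ∀ i j, E i j → f i = f j ∨ EH (f i) (f j)) (h : Fin m) (k : ℕ) :
    SGDerives (RBCanonical E EH f)
      ⟨{x | f x = h ∧ (x : ℕ) < k}, {x | f x < h ∧ ¬ EH (f x) h}, {x | EH (f x) h}⟩ := by
  induction k with
  | zero => simpa using SGDerives.symmetry _ _ _ (.triviality _ _)
  | succ k ih =>
    by_cases hk : ∃ i : Fin n, (i : ℕ) = k ∧ f i = h
    · obtain ⟨i, rfl, rfl⟩ := hk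
      have hsplit : {x | f x = f i ∧ (x : ℕ) < i + 1} = {x | f x = f i ∧ x < i} ∪ {i} := by
        ext x
        constructor
        · rintro ⟨hx, hlt⟩
          rcases Nat.lt_succ_iff_lt_or_eq.1 hlt with hlt | heq
          exacts [.inl ⟨hx, hlt⟩, .inr (Fin.ext heq)]
        · rintro (⟨hx, hlt⟩ | rfl)
          exacts [⟨hx, Nat.lt_succ_of_lt hlt⟩, ⟨rfl, Nat.lt_succ_self _⟩]
      have hvar : SGDerives (RBCanonical E EH f)
          ⟨{i}, {x | f x < f i ∧ ¬ EH (f x) (f i)},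
            {x | f x = f i ∧ x < i} ∪ {x | EH (f x) (f i)}⟩ := by
        rw [union_comm]
        exact .mem _ (RBCanonical_eq htopoG hmono hsummary ▸ ⟨i, rfl⟩)
      rw [hsplit]
      exact ih.contraction_left hvar
    · have hsame : {x | f x = h ∧ (x : ℕ) < k + 1} = {x | f x = h ∧ (x : ℕ) < k} := by
        ext x
        simp only [mem_ofPred_eq, Nat.lt_succ_iff_lt_or_eq]
        exact and_congr_right fun hx ↦ or_iff_left fun hxk ↦ hk ⟨x, hxk, hx⟩
      rwa [hsame]

theorem sgDerives_RBCanonical_of_mem_RBSummary (htopoG : ∀ i j, E i j → i < j)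
    (hmono : Monotone f) (hsummary : ∀ i j, E i j → f i = f j ∨ EH (f i) (f j)) :
    ∀ ci ∈ RBSummary EH f, SGDerives (RBCanonical E EH f) ci := by
  rintro _ ⟨h, rfl⟩
  have hcluster : f ⁻¹' {h} = {x | f x = h ∧ (x : ℕ) < n} := by
    ext x
    simp
  rw [hcluster]
  exact sgDerives_cluster_prefix htopoG hmono hsummary h n

end RecursiveBasis

theorem recursiveBasis_summary_equiv_canonical_general {n m : ℕ}
    (E : Fin n → Fin n → Prop) (htopoG : ∀ i j, E i j → i < j)
    (EH : Fin m → Fin m → Prop)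
    (f : Fin n → Fin m) (hmono : Monotone f)
    (hsummary : ∀ i j, E i j → f i = f j ∨ EH (f i) (f j)) :
    (∀ ci ∈ RBCanonical E EH f, SGDerives (RBSummary EH f) ci) ∧
    (∀ ci ∈ RBSummary EH f, SGDerives (RBCanonical E EH f) ci) ∧
    (∀ (Ω : Type) [MeasurableSpace Ω] [StandardBorelSpace Ω]
        (μ : Measure Ω) [IsProbabilityMeasure μ]
        (X : Fin n → Ω → ℝ) (hX : ∀ i, Measurable (X i)),
      (∀ ci ∈ RBSummary EH f, SatCI μ X hX ci) ↔
        (∀ ci ∈ RBCanonical E EH f, SatCI μ X hX ci)) := by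
  have hSG := sgDerives_RBSummary_of_mem_RBCanonical htopoG hmono hsummary
  have hGS := sgDerives_RBCanonical_of_mem_RBSummary htopoG hmono hsummary
  exact ⟨hSG, hGS, fun Ω _ _ μ _ X hX ↦ satCI_iff_of_sgDerives hX hSG hGS⟩

theorem recursiveBasis_summary_equiv_canonical {n m : ℕ}
    (E : Fin n → Fin n → Prop) (htopoG : ∀ i j, E i j → i < j)
    (EH : Fin m → Fin m → Prop) (htopoH : ∀ a b, EH a b → a < b)
    (f : Fin n → Fin m) (hf : Function.Surjective f) (hmono : Monotone f)
    (hsummary : ∀ i j, E i j → f i = f j ∨ EH (f i) (f j)) :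
    (∀ ci ∈ RBCanonical E EH f, SGDerives (RBSummary EH f) ci) ∧
    (∀ ci ∈ RBSummary EH f, SGDerives (RBCanonical E EH f) ci) ∧
    (∀ (Ω : Type) [MeasurableSpace Ω] [StandardBorelSpace Ω]
        (μ : Measure Ω) [IsProbabilityMeasure μ]
        (X : Fin n → Ω → ℝ) (hX : ∀ i, Measurable (X i)),
      (∀ ci ∈ RBSummary EH f, SatCI μ X hX ci) ↔
        (∀ ci ∈ RBCanonical E EH f, SatCI μ X hX ci)) :=
  recursiveBasis_summary_equiv_canonical_general E htopoG EH f hmono hsummary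

end CausalDAGSummary
end

section
/- Let (H,f) be a summary DAG for a DAG G, and let X, Y, Z be pairwise disjoint subsets of V(H). If X and Y are d-separated by Z in H, then for every causal DAG G' compatible with (H,f), the sets f^{-1}(X) and f^{-1}(Y) are d-separated by f^{-1}(Z) in G' (soundness of s-separation). -/
namespace CausalDAGSummary

variable {α : Type*}

/-- A trail in a directed graph: a sequence of vertices such that consecutive
vertices are joined by an edge (in one direction or the other), with distinct edges
used along the trail. -/
def IsTrail (E : α → α → Prop) (xs : List α) : Prop :=
  xs.Chain' (fun a b => E a b ∨ E b a) ∧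
    ((xs.zip xs.tail).map (fun p => Sym2.mk p)).Nodup

/-- The vertex at position `i` of the trail `xs` is head-to-head: both its
neighbouring edges along the trail point into it. -/
def HeadToHead (E : α → α → Prop) (xs : List α) (i : ℕ) : Prop :=
  ∃ (_ : 0 < i) (h2 : i + 1 < xs.length),
    E (xs.get ⟨i - 1, by omega⟩) (xs.get ⟨i, by omega⟩) ∧
      E (xs.get ⟨i + 1, h2⟩) (xs.get ⟨i, by omega⟩)

/-- A trail is active given `Z` if every head-to-head vertex of the trail belongs to
`Z` or has a descendant in `Z`, and every non-head-to-head vertex of the trail does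
not belong to `Z`. -/
def ActiveTrail (E : α → α → Prop) (Z : Set α) (xs : List α) : Prop :=
  IsTrail E xs ∧
    ∀ (i : ℕ) (hi : i < xs.length),
      (HeadToHead E xs i →
        ∃ d ∈ Z, Relation.ReflTransGen E (xs.get ⟨i, hi⟩) d) ∧
      (¬ HeadToHead E xs i → xs.get ⟨i, hi⟩ ∉ Z)

/-- `X` and `Y` are d-connected given `Z`: some active trail joins a vertex of `X`
to a vertex of `Y`. -/
def DConnected (E : α → α → Prop) (X Y Z : Set α) : Prop :=
  ∃ (xs : List α) (hne : xs ≠ []),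
    xs.head hne ∈ X ∧ xs.getLast hne ∈ Y ∧ ActiveTrail E Z xs

/-- `X` and `Y` are d-separated by `Z`: every trail between a vertex of `X` and a
vertex of `Y` is blocked given `Z`. -/
def DSeparated (E : α → α → Prop) (X Y Z : Set α) : Prop :=
  ¬ DConnected E X Y Z

/-!
Map an active trail of `G'` to `H` vertex by vertex, keeping the orientation of every step. Each
step becomes an edge of `H` pointing the same way or stays at one vertex, and the colliders sit at
the same positions: a collider keeps its descendant in `f⁻¹(Z)`, whose image is a descendant in
`Z`, and a non-collider stays outside `Z`. So `X` and `Y` are joined by an active walk in the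
reflexive closure of `H`. A shortest such walk repeats no vertex: cutting out the loop between two
occurrences of a vertex keeps it active, because if the cut point becomes a collider, following
the loop forward from it reaches a collider of the loop along a directed path. A walk without
repeated vertices never stays put and, `H` being acyclic, its colliders are exactly its
head-to-head vertices, so it is an active trail of `H`.
-/

open Relation

section ActiveWalks

variable {β : Type*}

def IsCollider (n : ℕ) (fwd : ℕ → Prop) (i : ℕ) : Prop :=
  0 < i ∧ i < n ∧ fwd (i - 1) ∧ ¬ fwd i

/-- Step `i` of the walk `v 0, …, v n` runs along an edge of `R` when `fwd i` and against one
otherwise. Orientations are recorded rather than read off `R`, so that a walk in `ReflGen E` can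
stay at a vertex and still remember which way the edge it came from points. -/
structure IsActiveWalk (R : α → α → Prop) (Z : Set α) (n : ℕ) (v : ℕ → α) (fwd : ℕ → Prop) :
    Prop where
  step_fwd : ∀ i < n, fwd i → R (v i) (v (i + 1))
  step_bwd : ∀ i < n, ¬ fwd i → R (v (i + 1)) (v i)
  collider : ∀ i, IsCollider n fwd i → ∃ d ∈ Z, ReflTransGen R (v i) d
  notMem : ∀ i ≤ n, ¬ IsCollider n fwd i → v i ∉ Z

def WalkConnected (R : α → α → Prop) (X Y Z : Set α) : Prop :=
  ∃ n v fwd, v 0 ∈ X ∧ v n ∈ Y ∧ IsActiveWalk R Z n v fwd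

/-- Reindexing that cuts out the loop between positions `i` and `i + d` of a walk. -/
def spliceIndex (i d k : ℕ) : ℕ := if k < i then k else k + d

theorem isCollider_comp_spliceIndex_iff {fwd : ℕ → Prop} {n i d k : ℕ} (hin : i + d ≤ n)
    (hk : k ≠ i) :
    IsCollider (n - d) (fwd ∘ spliceIndex i d) k ↔ IsCollider n fwd (spliceIndex i d k) := by
  simp only [IsCollider, spliceIndex, Function.comp]
  rcases lt_or_gt_of_ne hk with hk | hk
  · simp only [if_pos hk, if_pos (show k - 1 < i by omega)]
    constructor <;> rintro ⟨h0, h1, h2, h3⟩ <;> exact ⟨h0, by omega, h2, h3⟩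
  · simp only [if_neg (show ¬ k < i by omega), if_neg (show ¬ k - 1 < i by omega),
      show k - 1 + d = k + d - 1 by omega]
    constructor <;> rintro ⟨h0, h1, h2, h3⟩ <;> exact ⟨by omega, by omega, h2, h3⟩

namespace IsActiveWalk

variable {R : α → α → Prop} {Z : Set α} {n : ℕ} {v : ℕ → α} {fwd : ℕ → Prop}

/-- Following the walk forward from `p`, the first backward step ends at a collider. -/
theorem exists_descendant (hw : IsActiveWalk R Z n v fwd) {p q : ℕ} (hp : 0 < p) (hpq : p ≤ q)
    (hqn : q < n) (hin : fwd (p - 1)) (hout : ¬ fwd q) : ∃ d ∈ Z, ReflTransGen R (v p) d := by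
  induction h : q - p generalizing p with
  | zero => exact hw.collider p ⟨hp, by omega, hin, by rwa [show p = q by omega]⟩
  | succ k ih =>
    by_cases hp' : fwd p
    · obtain ⟨d, hd, hpath⟩ := ih (p := p + 1) (by omega) (by omega) (by simpa using hp') (by omega)
      exact ⟨d, hd, .head (hw.step_fwd p (by omega) hp') hpath⟩
    · exact hw.collider p ⟨hp, by omega, hin, hp'⟩

theorem splice (hw : IsActiveWalk R Z n v fwd) {i d : ℕ} (hin : i + d ≤ n)
    (hloop : v (i + d) = v i) :
    IsActiveWalk R Z (n - d) (v ∘ spliceIndex i d) (fwd ∘ spliceIndex i d) := by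
  have hσ : ∀ k, spliceIndex i d k = if k < i then k else k + d := fun _ => rfl
  have hsucc : ∀ k, v (spliceIndex i d (k + 1)) = v (spliceIndex i d k + 1) := by
    intro k
    rcases lt_trichotomy (k + 1) i with hk | hk | hk
    · rw [hσ, hσ, if_pos hk, if_pos (by omega)]
    · rw [hσ, hσ, if_neg (by omega), if_pos (by omega), hk, hloop]
    · rw [hσ, hσ, if_neg (by omega), if_neg (by omega), Nat.add_right_comm]
  have hlt : ∀ k < n - d, spliceIndex i d k < n := fun k hk => by rw [hσ]; split_ifs <;> omega
  refine ⟨fun k hk h => ?_, fun k hk h => ?_, fun k hk => ?_, fun k hk hnc => ?_⟩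
  · simpa only [Function.comp, hsucc] using hw.step_fwd _ (hlt k hk) h
  · simpa only [Function.comp, hsucc] using hw.step_bwd _ (hlt k hk) h
  · by_cases hki : k = i
    · subst hki
      obtain ⟨h0, hkn, hl, hr⟩ := hk
      simp only [Function.comp, hσ, lt_irrefl, if_false, if_pos (show k - 1 < k by omega)] at hl hr ⊢
      rw [hloop]
      exact hw.exists_descendant h0 (by omega) (by omega) hl hr
    · exact hw.collider _ ((isCollider_comp_spliceIndex_iff hin hki).1 hk)
  · by_cases hki : k = i
    · subst hki
      simp only [Function.comp, hσ, lt_irrefl, if_false]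
      by_cases hleft : 0 < k ∧ fwd (k - 1)
      · refine hw.notMem _ hin fun hc => hnc ⟨hleft.1, by have := hc.2.1; omega, ?_, ?_⟩
        · simpa only [Function.comp, hσ, if_pos (show k - 1 < k by omega)] using hleft.2
        · simpa only [Function.comp, hσ, lt_irrefl, if_false] using hc.2.2.2
      · rw [hloop]
        exact hw.notMem k (by omega) fun hc => hleft ⟨hc.1, hc.2.2.1⟩
    · refine hw.notMem _ ?_ fun hc => hnc ((isCollider_comp_spliceIndex_iff hin hki).2 hc)
      rw [hσ]; split_ifs <;> omega

theorem map {S : β → β → Prop} {f : α → β} (hf : ∀ a b, R a b → S (f a) (f b)) {Z : Set β}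
    (hw : IsActiveWalk R (f ⁻¹' Z) n v fwd) : IsActiveWalk S Z n (f ∘ v) fwd where
  step_fwd i hi h := hf _ _ (hw.step_fwd i hi h)
  step_bwd i hi h := hf _ _ (hw.step_bwd i hi h)
  collider i h :=
    let ⟨d, hd, hpath⟩ := hw.collider i h
    ⟨f d, hd, ReflTransGen.lift f hf _ _ hpath⟩
  notMem i hi h := hw.notMem i hi h

end IsActiveWalk

namespace WalkConnected

variable {R : α → α → Prop} {X Y Z : Set α}

theorem map {S : β → β → Prop} {f : α → β} (hf : ∀ a b, R a b → S (f a) (f b)) {X Y Z : Set β}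
    (h : WalkConnected R (f ⁻¹' X) (f ⁻¹' Y) (f ⁻¹' Z)) : WalkConnected S X Y Z :=
  let ⟨n, v, fwd, hX, hY, hw⟩ := h
  ⟨n, f ∘ v, fwd, hX, hY, hw.map hf⟩

/-- A shortest active walk repeats no vertex, since cutting out a loop keeps it active. -/
theorem exists_injOn (h : WalkConnected R X Y Z) :
    ∃ n v fwd, v 0 ∈ X ∧ v n ∈ Y ∧ IsActiveWalk R Z n v fwd ∧ Set.InjOn v (Set.Iic n) := by
  classical
  obtain ⟨v, fwd, hX, hY, hw⟩ := Nat.find_spec h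
  have hne : ∀ a b, a < b → b ≤ Nat.find h → v a ≠ v b := by
    intro a b hab hb hloop
    have hstart : v (spliceIndex a (b - a) 0) = v 0 := by
      by_cases ha : 0 < a
      · rw [spliceIndex, if_pos ha]
      · obtain rfl : a = 0 := by omega
        simp [spliceIndex, hloop]
    refine Nat.find_min h (m := Nat.find h - (b - a)) (by omega)
      ⟨v ∘ spliceIndex a (b - a), fwd ∘ spliceIndex a (b - a), ?_, ?_,
        hw.splice (by omega) (by rw [Nat.add_sub_cancel' hab.le, hloop])⟩
    · rwa [Function.comp, hstart]
    · rwa [Function.comp, spliceIndex, if_neg (by omega), Nat.sub_add_cancel (by omega)]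
  refine ⟨_, v, fwd, hX, hY, hw, fun a ha b hb hab => ?_⟩
  rcases lt_trichotomy a b with hlt | heq | hgt
  · exact absurd hab (hne a b hlt hb)
  · exact heq
  · exact absurd hab.symm (hne b a hgt ha)

end WalkConnected

end ActiveWalks

section Trails

variable {E : α → α → Prop} {Z : Set α} {n : ℕ} {v : ℕ → α}

theorem headToHead_map_range_iff {i : ℕ} :
    HeadToHead E ((List.range (n + 1)).map v) i ↔
      0 < i ∧ i < n ∧ E (v (i - 1)) (v i) ∧ E (v (i + 1)) (v i) := by
  simp only [HeadToHead, List.get_eq_getElem, List.getElem_map, List.getElem_range,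
    List.length_map, List.length_range]
  constructor <;> rintro ⟨h0, hn, hl, hr⟩ <;> exact ⟨h0, by omega, hl, hr⟩

theorem isChain_map_range_iff {R : α → α → Prop} :
    List.IsChain R ((List.range (n + 1)).map v) ↔ ∀ i < n, R (v i) (v (i + 1)) := by
  simp [List.isChain_iff_getElem]

theorem isTrail_map_range (hstep : ∀ i < n, E (v i) (v (i + 1)) ∨ E (v (i + 1)) (v i))
    (hv : Set.InjOn v (Set.Iic n)) : IsTrail E ((List.range (n + 1)).map v) := by
  refine ⟨isChain_map_range_iff.2 hstep, ?_⟩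
  have hzip : ((List.range (n + 1)).map v).zip ((List.range (n + 1)).map v).tail =
      (List.range n).map fun i => (v i, v (i + 1)) :=
    List.ext_getElem (by simp) (by simp)
  rw [hzip, List.map_map]
  refine List.nodup_range.map_on fun a ha b hb hab => ?_
  simp only [List.mem_range] at ha hb
  -- `Sym2.mk p` is the curried map `q ↦ s(p, q)`, so comparing at `q = p` recovers `p`.
  have hpair : (v a, v (a + 1)) = (v b, v (b + 1)) := by
    have := congrFun hab (v a, v (a + 1))
    rcases Sym2.eq_iff.1 this with ⟨h, -⟩ | ⟨-, h⟩ <;> exact h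
  exact hv (by simp; omega) (by simp; omega) (congrArg Prod.fst hpair)

theorem ActiveTrail.isActiveWalk (hE : ∀ ⦃a b⦄, E a b → ¬ E b a)
    (h : ActiveTrail E Z ((List.range (n + 1)).map v)) :
    IsActiveWalk E Z n v fun i => E (v i) (v (i + 1)) := by
  have hstep := isChain_map_range_iff.1 h.1.1
  have hcol : ∀ i, IsCollider n (fun i => E (v i) (v (i + 1))) i ↔
      HeadToHead E ((List.range (n + 1)).map v) i := by
    intro i
    rw [headToHead_map_range_iff]
    constructor
    · rintro ⟨h0, hn, hl, hr⟩
      exact ⟨h0, hn, by simpa [Nat.sub_add_cancel h0] using hl, (hstep i hn).resolve_left hr⟩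
    · rintro ⟨h0, hn, hl, hr⟩
      exact ⟨h0, hn, by simpa [Nat.sub_add_cancel h0] using hl, fun hf => hE hf hr⟩
  refine ⟨fun i _ h => h, fun i hi h => (hstep i hi).resolve_left h, fun i hc => ?_,
    fun i hi hc => ?_⟩
  · simpa using (h.2 i (by simp; have := hc.2.1; omega)).1 ((hcol i).1 hc)
  · simpa using (h.2 i (by simp; omega)).2 (mt (hcol i).2 hc)

theorem IsActiveWalk.activeTrail (hE : ∀ ⦃a b⦄, E a b → ¬ E b a) {fwd : ℕ → Prop}
    (hw : IsActiveWalk (ReflGen E) Z n v fwd) (hv : Set.InjOn v (Set.Iic n)) :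
    ActiveTrail E Z ((List.range (n + 1)).map v) := by
  have hne : ∀ i < n, v i ≠ v (i + 1) := fun i hi h =>
    absurd (hv (by simp; omega) (by simp; omega) h) (by omega)
  have hfwd : ∀ i < n, fwd i → E (v i) (v (i + 1)) := fun i hi h =>
    ((reflGen_iff _ _ _).1 (hw.step_fwd i hi h)).resolve_left (hne i hi).symm
  have hbwd : ∀ i < n, ¬ fwd i → E (v (i + 1)) (v i) := fun i hi h =>
    ((reflGen_iff _ _ _).1 (hw.step_bwd i hi h)).resolve_left (hne i hi)
  have hcol : ∀ i, IsCollider n fwd i ↔ HeadToHead E ((List.range (n + 1)).map v) i := by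
    intro i
    rw [headToHead_map_range_iff]
    constructor
    · rintro ⟨h0, hn, hl, hr⟩
      refine ⟨h0, hn, ?_, hbwd i hn hr⟩
      simpa [Nat.sub_add_cancel h0] using hfwd (i - 1) (by omega) hl
    · rintro ⟨h0, hn, hl, hr⟩
      refine ⟨h0, hn, ?_, fun hf => hE hr (hfwd i hn hf)⟩
      by_contra hf
      exact hE hl (by simpa [Nat.sub_add_cancel h0] using hbwd (i - 1) (by omega) hf)
  refine ⟨isTrail_map_range (fun i hi => ?_) hv, fun i hi => ⟨fun hh => ?_, fun hh => ?_⟩⟩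
  · by_cases hf : fwd i
    exacts [.inl (hfwd i hi hf), .inr (hbwd i hi hf)]
  · simpa using hw.collider i ((hcol i).2 hh)
  · simpa using hw.notMem i (by simp at hi; omega) (mt (hcol i).1 hh)

theorem DConnected.walkConnected (hE : ∀ ⦃a b⦄, E a b → ¬ E b a) {X Y : Set α}
    (h : DConnected E X Y Z) : WalkConnected E X Y Z := by
  obtain ⟨xs, hne, hX, hY, hact⟩ := h
  have hlen : 0 < xs.length := List.length_pos_iff.2 hne
  set v : ℕ → α := fun i => xs.getD i (xs.head hne)
  have hv : ∀ i (hi : i < xs.length), v i = xs[i] := fun i hi => List.getD_eq_getElem _ _ hi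
  have hxs : xs = (List.range (xs.length - 1 + 1)).map v :=
    List.ext_getElem (by simp; omega) fun i h₁ _ => by simp [hv i h₁]
  refine ⟨xs.length - 1, v, _, ?_, ?_, (hxs ▸ hact).isActiveWalk hE⟩
  · simpa [hv 0 hlen, List.head_eq_getElem] using hX
  · simpa [hv _ (Nat.sub_lt hlen one_pos), List.getLast_eq_getElem] using hY

theorem WalkConnected.dConnected (hE : ∀ ⦃a b⦄, E a b → ¬ E b a) {X Y : Set α}
    (h : WalkConnected (ReflGen E) X Y Z) : DConnected E X Y Z := by
  obtain ⟨n, v, fwd, hX, hY, hw, hv⟩ := h.exists_injOn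
  exact ⟨_, by simp, by simpa using hX, by simpa using hY, hw.activeTrail hE hv⟩

end Trails

theorem IsDAG.asymm {E : α → α → Prop} (hE : IsDAG E) ⦃a b : α⦄ (hab : E a b) : ¬ E b a :=
  fun hba => hE a (.head hab (.single hba))

theorem sSeparation_sound_general {α β : Type*} (EH : β → β → Prop) (hH : IsDAG EH) (f : α → β)
    (X Y Z : Set β) (hsep : DSeparated EH X Y Z) :
    ∀ EG' : α → α → Prop, IsDAG EG' →
      (∀ a b, EG' a b → f a = f b ∨ EH (f a) (f b)) →
      DSeparated EG' (f ⁻¹' X) (f ⁻¹' Y) (f ⁻¹' Z) := by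
  intro EG' hG' hcompat hcon
  have hlift : ∀ a b, EG' a b → ReflGen EH (f a) (f b) := fun a b hab =>
    (reflGen_iff _ _ _).2 ((hcompat a b hab).imp_left Eq.symm)
  exact hsep (((hcon.walkConnected hG'.asymm).map hlift).dConnected hH.asymm)

theorem sSeparation_sound {α β : Type*} [Fintype α] [Fintype β]
    (EG : α → α → Prop) (EH : β → β → Prop)
    (hG : IsDAG EG) (hH : IsDAG EH)
    (f : α → β) (hf : Function.Surjective f)
    (hsummary : ∀ a b, EG a b → f a = f b ∨ EH (f a) (f b))
    (X Y Z : Set β) (hXY : Disjoint X Y) (hXZ : Disjoint X Z) (hYZ : Disjoint Y Z)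
    (hsep : DSeparated EH X Y Z) :
    ∀ EG' : α → α → Prop, IsDAG EG' →
      (∀ a b, EG' a b → f a = f b ∨ EH (f a) (f b)) →
      DSeparated EG' (f ⁻¹' X) (f ⁻¹' Y) (f ⁻¹' Z) :=
  sSeparation_sound_general EH hH f X Y Z hsep

end CausalDAGSummary
end

section
/- Let (H,f) be a summary DAG for a DAG G, and let X, Y, Z be pairwise disjoint subsets of V(H). If X and Y are d-connected given Z in H, then there exists a DAG G' compatible with (H,f) such that f^{-1}(X) and f^{-1}(Y) are d-connected given f^{-1}(Z) in G' (completeness of s-separation). -/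
/-!
Take for `G'` the pullback of `H` along `f`: `a → b` in `G'` iff `f a → f b` in `H`. It is acyclic
since `f` maps a cycle of `G'` to a cycle of `H`, and it is compatible with `(H, f)` by
construction. A section `g` of `f` is then a graph embedding of `H` into `G'` with
`g⁻¹(f⁻¹ Z) = Z`, so it carries an active trail of `H` from `X` to `Y` given `Z`
to an active trail of `G'` from `f⁻¹ X` to `f⁻¹ Y` given `f⁻¹ Z`.
-/

namespace CausalDAGSummary

variable {α : Type*}

open Function

theorem IsDAG.comap {β : Type*} {E : β → β → Prop} (f : α → β) (hE : IsDAG E) :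
    IsDAG (fun a b => E (f a) (f b)) :=
  fun a hcyc => hE (f a) (Relation.TransGen.lift f (fun _ _ h => h) a a hcyc)

theorem _root_.Sym2.mk_injective {γ : Type*} : Injective (Sym2.mk : γ → γ → Sym2 γ) :=
  fun a b h => by
    rcases Sym2.eq_iff.1 (congrFun h a) with ⟨hab, -⟩ | ⟨-, hab⟩ <;> exact hab

section RelEmbedding

variable {β : Type*} {E : β → β → Prop} {E' : α → α → Prop} (g : E ↪r E') {xs : List β}

theorem IsTrail.map (h : IsTrail E xs) : IsTrail E' (xs.map g) := by
  refine ⟨?_, ?_⟩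
  · rw [List.Chain', List.isChain_map]
    exact h.1.imp fun a b hab => by simpa only [g.map_rel_iff] using hab
  · -- `Sym2.mk p` in `IsTrail` is a partial application of the curried `Sym2.mk`, so the
    -- condition says that the consecutive ordered pairs are distinct.
    have hpairs := (List.nodup_map_iff Sym2.mk_injective).1 h.2
    rw [List.nodup_map_iff Sym2.mk_injective, ← List.map_tail, List.zip_map]
    exact hpairs.map (g.injective.prodMap g.injective)

theorem headToHead_map_iff (i : ℕ) : HeadToHead E' (xs.map g) i ↔ HeadToHead E xs i := by
  simp only [HeadToHead, List.get_eq_getElem, List.getElem_map, g.map_rel_iff, List.length_map]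

theorem ActiveTrail.map {Z : Set β} {Z' : Set α} (hZ : g ⁻¹' Z' = Z) (h : ActiveTrail E Z xs) :
    ActiveTrail E' Z' (xs.map g) := by
  refine ⟨h.1.map g, fun i hi => ?_⟩
  have hi' : i < xs.length := by simpa using hi
  obtain ⟨hcollider, hnoncollider⟩ := h.2 i hi'
  rw [headToHead_map_iff]
  simp only [List.get_eq_getElem, List.getElem_map]
  refine ⟨fun hh => ?_, fun hh => ?_⟩
  · obtain ⟨d, hdZ, hdesc⟩ := hcollider hh
    exact ⟨g d, by rwa [← hZ] at hdZ,
      Relation.ReflTransGen.lift g (fun _ _ => g.map_rel_iff.2) _ _ hdesc⟩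
  · have := hnoncollider hh
    rwa [← hZ] at this

theorem DConnected.map {X Y Z : Set β} {X' Y' Z' : Set α} (hX : Set.MapsTo g X X')
    (hY : Set.MapsTo g Y Y') (hZ : g ⁻¹' Z' = Z) (h : DConnected E X Y Z) :
    DConnected E' X' Y' Z' := by
  obtain ⟨xs, hne, hhead, hlast, hactive⟩ := h
  refine ⟨xs.map g, by simpa using hne, ?_, ?_, hactive.map g hZ⟩
  · rw [List.head_map]
    exact hX hhead
  · rw [List.getLast_map]
    exact hY hlast

end RelEmbedding

noncomputable def surjInvRelEmbedding {β : Type*} (E : β → β → Prop) {f : α → β}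
    (hf : Surjective f) : E ↪r (fun a b => E (f a) (f b)) where
  toFun := surjInv hf
  inj' := injective_surjInv hf
  map_rel_iff' := by simp only [Embedding.coeFn_mk, surjInv_eq hf, implies_true]

theorem sSeparation_complete_general {α β : Type*}
    (EH : β → β → Prop)
    (hH : IsDAG EH)
    (f : α → β) (hf : Function.Surjective f)
    (X Y Z : Set β)
    (hconn : DConnected EH X Y Z) :
    ∃ EG' : α → α → Prop, IsDAG EG' ∧
      (∀ a b, EG' a b → f a = f b ∨ EH (f a) (f b)) ∧
      DConnected EG' (f ⁻¹' X) (f ⁻¹' Y) (f ⁻¹' Z) := by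
  have hsection (S : Set β) : surjInv hf ⁻¹' (f ⁻¹' S) = S :=
    LeftInverse.preimage_preimage (rightInverse_surjInv hf) S
  refine ⟨fun a b => EH (f a) (f b), hH.comap f, fun _ _ => Or.inr, ?_⟩
  exact hconn.map (surjInvRelEmbedding EH hf) (hsection X).ge (hsection Y).ge (hsection Z)

theorem sSeparation_complete {α β : Type*} [Fintype α] [Fintype β]
    (EG : α → α → Prop) (EH : β → β → Prop)
    (hG : IsDAG EG) (hH : IsDAG EH)
    (f : α → β) (hf : Function.Surjective f)
    (hsummary : ∀ a b, EG a b → f a = f b ∨ EH (f a) (f b))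
    (X Y Z : Set β) (hXY : Disjoint X Y) (hXZ : Disjoint X Z) (hYZ : Disjoint Y Z)
    (hconn : DConnected EH X Y Z) :
    ∃ EG' : α → α → Prop, IsDAG EG' ∧
      (∀ a b, EG' a b → f a = f b ∨ EH (f a) (f b)) ∧
      DConnected EG' (f ⁻¹' X) (f ⁻¹' Y) (f ⁻¹' Z) :=
  sSeparation_complete_general EH hH f hf X Y Z hconn

end CausalDAGSummary
end
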